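/- Let Z(x) = ∑_{n≥0} (x^{qn}/(λ^n q^n n!)) exp((λ^r/(r+1))((qn-1/2)^{r+1} - (-1/2)^{r+1})). Then the operator λ x d/dx - x^{q+1/2} exp((q/(r+1)) ∑_{i=0}^r x^{-q}(λ x d/dx)^i x^q (λ x d/dx)^{r-i}) x^{-1/2} annihilates Z. -/

import Mathlib

open PowerSeries

/-- The principal specialization of the mixed `q`-double `r`-spin partition function, as a
formal power series: `Z = ∑_{n ≥ 0} (x^{qn}/(λ^n q^n n!)) exp((λ^r/(r+1))((qn-1/2)^{r+1} - (-1/2)^{r+1}))`. -/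
noncomputable def Zmix (q r : ℕ) (l : ℝ) : PowerSeries ℝ :=
  PowerSeries.mk fun k =>
    if q ∣ k then
      1 / (l ^ (k / q) * (q : ℝ) ^ (k / q) * (Nat.factorial (k / q) : ℝ)) *
        Real.exp (l ^ r / ((r : ℝ) + 1) *
          (((q : ℝ) * ((k / q : ℕ) : ℝ) - 1 / 2) ^ (r + 1) - (-(1 / 2) : ℝ) ^ (r + 1)))
    else 0

/-- The operator `B = x^{q+1/2} exp((q/(r+1)) ∑_{i=0}^r x^{-q}(λ x d/dx)^i x^q (λ x d/dx)^{r-i}) x^{-1/2}`,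
acting on `x^n` by `B x^n = exp((λ^r/(r+1))((n+q-1/2)^{r+1} - (n-1/2)^{r+1})) x^{n+q}`. -/
noncomputable def opB (q r : ℕ) (l : ℝ) (f : PowerSeries ℝ) : PowerSeries ℝ :=
  PowerSeries.mk fun n =>
    if q ≤ n then
      Real.exp (l ^ r / ((r : ℝ) + 1) *
          ((((n - q : ℕ) : ℝ) + (q : ℝ) - 1 / 2) ^ (r + 1) -
            (((n - q : ℕ) : ℝ) - 1 / 2) ^ (r + 1))) *
        PowerSeries.coeff (n - q) f
    else 0

/-- The operator `λ x d/dx`, acting on `x^n` by multiplication by `λn`. -/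
noncomputable def xDx (l : ℝ) (f : PowerSeries ℝ) : PowerSeries ℝ :=
  PowerSeries.mk fun n => l * (n : ℝ) * PowerSeries.coeff n f

/-! Put `E(x) = (λ^r/(r+1)) ((x - 1/2)^{r+1} - (-1/2)^{r+1})`. The coefficient of `x^{qm}` in `Z`
is `exp (E(qm)) / ((λq)^m m!)`, and `B` moves the coefficient of `x^n` to `x^{n+q}` multiplying it
by `exp (E(n+q) - E(n))`. The exponentials therefore telescope, and comparing the coefficients of
`x^{q(m+1)}` in `λ x d/dx Z` and `B Z` reduces to `λq(m+1) / ((λq)^{m+1} (m+1)!) = 1 / ((λq)^m m!)`.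
All other coefficients vanish on both sides. -/

noncomputable def spinExponent (r : ℕ) (l x : ℝ) : ℝ :=
  l ^ r / ((r : ℝ) + 1) * ((x - 1 / 2) ^ (r + 1) - (-(1 / 2) : ℝ) ^ (r + 1))

@[simp]
theorem coeff_xDx (l : ℝ) (f : PowerSeries ℝ) (n : ℕ) :
    coeff n (xDx l f) = l * n * coeff n f := by
  simp [xDx]

theorem coeff_opB_of_lt {q n : ℕ} (r : ℕ) (l : ℝ) (f : PowerSeries ℝ) (h : n < q) :
    coeff n (opB q r l f) = 0 := by
  simp [opB, Nat.not_le.mpr h]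

theorem coeff_opB_add (q r : ℕ) (l : ℝ) (f : PowerSeries ℝ) (n : ℕ) :
    coeff (n + q) (opB q r l f) =
      Real.exp (spinExponent r l (n + q) - spinExponent r l n) * coeff n f := by
  simp only [opB, coeff_mk, if_pos (Nat.le_add_left q n), Nat.add_sub_cancel, spinExponent]
  congr 2
  ring

theorem coeff_Zmix_of_not_dvd {q k : ℕ} (r : ℕ) (l : ℝ) (h : ¬ q ∣ k) :
    coeff k (Zmix q r l) = 0 := by
  simp [Zmix, h]

theorem coeff_Zmix_mul {q : ℕ} (hq : 0 < q) (r : ℕ) (l : ℝ) (m : ℕ) :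
    coeff (q * m) (Zmix q r l) =
      Real.exp (spinExponent r l (q * m : ℕ)) / ((l * q) ^ m * m.factorial) := by
  simp only [Zmix, coeff_mk, if_pos (Dvd.intro m rfl), Nat.mul_div_cancel_left _ hq,
    spinExponent, mul_pow, Nat.cast_mul]
  ring

theorem coeff_Zmix_recursion {q : ℕ} (hq : 0 < q) (r : ℕ) {l : ℝ} (hl : l ≠ 0) (m : ℕ) :
    l * ((q * m + q : ℕ) : ℝ) * coeff (q * m + q) (Zmix q r l) =
      Real.exp (spinExponent r l ((q * m : ℕ) + q) - spinExponent r l (q * m : ℕ)) *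
        coeff (q * m) (Zmix q r l) := by
  have hq' : (q : ℝ) ≠ 0 := Nat.cast_ne_zero.mpr hq.ne'
  rw [← Nat.mul_succ, coeff_Zmix_mul hq, coeff_Zmix_mul hq, Real.exp_sub, Nat.factorial_succ,
    pow_succ]
  push_cast
  field_simp

theorem mixed_quantum_curve_annihilates_general (q r : ℕ) (hq : 0 < q) (l : ℝ)
    (hl : l ≠ 0) :
    xDx l (Zmix q r l) - opB q r l (Zmix q r l) = 0 := by
  ext n
  rw [map_sub, map_zero, coeff_xDx, sub_eq_zero]
  by_cases hdvd : q ∣ n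
  · obtain ⟨m, rfl⟩ := hdvd
    cases m with
    | zero => simp [coeff_opB_of_lt r l _ hq]
    | succ m => rw [Nat.mul_succ, coeff_opB_add, coeff_Zmix_recursion hq r hl]
  · rw [coeff_Zmix_of_not_dvd r l hdvd, mul_zero]
    rcases Nat.lt_or_ge n q with hlt | hle
    · rw [coeff_opB_of_lt r l _ hlt]
    · obtain ⟨k, rfl⟩ := Nat.exists_eq_add_of_le' hle
      have hk : ¬ q ∣ k := fun h => hdvd (Nat.dvd_add h dvd_rfl)
      rw [coeff_opB_add, coeff_Zmix_of_not_dvd r l hk, mul_zero]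

/-- the operator `λ x d/dx - B` annihilates `Z`. -/
theorem mixed_quantum_curve_annihilates (q r : ℕ) (hq : 0 < q) (hr : 0 < r) (l : ℝ)
    (hl : l ≠ 0) :
    xDx l (Zmix q r l) - opB q r l (Zmix q r l) = 0 :=
  mixed_quantum_curve_annihilates_general q r hq l hl
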